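/- arXiv:1604.08291 — 2 statements merged into one kernel-verified Lean document; each statement's English description precedes it below -/
import Mathlib

section
/- Let E be a real inner product space, let g : E → ℝ be convex, let C₂ > 0, and define f(Z) = g(Z) + C₂‖Z‖². Let θ ≥ 0 and let h : E → ℝ be Lipschitz with constant θ. If Z* is a global minimizer of f and Z' is a global minimizer of f + h, then ‖Z' − Z*‖ ≤ θ / C₂. -/
/-!
`f = g + C₂‖·‖²` is `2C₂`-strongly convex, so it grows at least quadratically away from its
minimizer: `C₂‖Z' - Z*‖² ≤ f Z' - f Z*`. Comparing `f + h` at `Z'` and `Z*` bounds the same gap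
by `h Z* - h Z' ≤ θ‖Z' - Z*‖`, and dividing by `‖Z' - Z*‖` gives the claim.
-/

open Filter Topology

lemma le_of_forall_one_sub_mul_le {a b : ℝ} (h : ∀ t ∈ Set.Ioo (0 : ℝ) 1, (1 - t) * a ≤ b) :
    a ≤ b := by
  have hlim : Tendsto (fun t : ℝ ↦ (1 - t) * a) (𝓝[>] 0) (𝓝 a) :=
    (((continuous_const.sub continuous_id).mul continuous_const).tendsto' 0 a (by simp)).mono_left
      nhdsWithin_le_nhds
  exact le_of_tendsto hlim (eventually_of_mem (Ioo_mem_nhdsGT zero_lt_one) h)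

lemma ConvexOn.strongConvexOn_add_mul_sq_norm {E : Type*} [NormedAddCommGroup E]
    [InnerProductSpace ℝ E] {s : Set E} {g : E → ℝ} (hg : ConvexOn ℝ s g) (c : ℝ) :
    StrongConvexOn s (2 * c) fun x ↦ g x + c * ‖x‖ ^ 2 := by
  rw [strongConvexOn_iff_convex]
  convert hg using 2
  ring

lemma StrongConvexOn.mul_sq_norm_sub_le_of_isMinOn {E : Type*} [NormedAddCommGroup E]
    [NormedSpace ℝ E] {s : Set E} {m : ℝ} {f : E → ℝ} (hf : StrongConvexOn s m f) {x y : E}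
    (hx : x ∈ s) (hy : y ∈ s) (hmin : IsMinOn f s x) :
    m / 2 * ‖y - x‖ ^ 2 ≤ f y - f x := by
  -- Compare `f x` with `f ((1 - t) • x + t • y)`, divide by `t`, and let `t → 0`.
  refine le_of_forall_one_sub_mul_le fun t ⟨ht0, ht1⟩ ↦ ?_
  have hseg := hf.2 hx hy (sub_nonneg.2 ht1.le) ht0.le (sub_add_cancel 1 t)
  have hle := isMinOn_iff.1 hmin _ (hf.1 hx hy (sub_nonneg.2 ht1.le) ht0.le (sub_add_cancel 1 t))
  rw [smul_eq_mul, smul_eq_mul, norm_sub_rev] at hseg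
  have : t * ((1 - t) * (m / 2 * ‖y - x‖ ^ 2)) ≤ t * (f y - f x) := by nlinarith
  exact le_of_mul_le_mul_left this ht0

/-- stability of the minimizer of the ridge-regularized convex
objective `f Z = g Z + C₂‖Z‖²` under a Lipschitz perturbation `h`:
`‖Z' − Z*‖ ≤ θ / C₂`. -/
theorem minimizer_stability_under_lipschitz_perturbation
    {E : Type*} [NormedAddCommGroup E] [InnerProductSpace ℝ E]
    (g : E → ℝ) (hg : ConvexOn ℝ Set.univ g)
    (C₂ : ℝ) (hC₂ : 0 < C₂)
    (f : E → ℝ) (hf : ∀ Z, f Z = g Z + C₂ * ‖Z‖ ^ 2)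
    (θ : ℝ) (hθ : 0 ≤ θ)
    (h : E → ℝ) (hLip : ∀ Z₁ Z₂ : E, |h Z₁ - h Z₂| ≤ θ * ‖Z₁ - Z₂‖)
    (Zstar : E) (hmin : ∀ Z, f Zstar ≤ f Z)
    (Z' : E) (hmin' : ∀ Z, f Z' + h Z' ≤ f Z + h Z) :
    ‖Z' - Zstar‖ ≤ θ / C₂ := by
  have hf_strong : StrongConvexOn Set.univ (2 * C₂) f := by
    rw [funext hf]
    exact hg.strongConvexOn_add_mul_sq_norm C₂
  have growth : C₂ * ‖Z' - Zstar‖ ^ 2 ≤ f Z' - f Zstar := by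
    simpa using hf_strong.mul_sq_norm_sub_le_of_isMinOn (Set.mem_univ Zstar) (Set.mem_univ Z')
      fun Z _ ↦ hmin Z
  have transfer : f Z' - f Zstar ≤ θ * ‖Z' - Zstar‖ := by
    have := (abs_le.1 (hLip Zstar Z')).2
    rw [norm_sub_rev] at this
    linarith [hmin' Zstar]
  rw [le_div_iff₀ hC₂]
  nlinarith [norm_nonneg (Z' - Zstar)]
end

section
/- Let E be a real vector space with a norm ‖·‖, let L ≥ 0, let ℓ₁, ℓ₂, … : E → ℝ each be Lipschitz with constant L, let C₂ ∈ ℝ, and for each m ≥ 1 define J_m(Z) = (1/m)·Σ_{v=1}^{m} ℓ_v(Z) + C₂‖Z‖². Then for every m ≥ 2, the function Z ↦ J_m(Z) − J_{m−1}(Z) is Lipschitz with constant 2L/m. -/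
/-!
The quadratic regulariser cancels in `J_m - J_{m-1}`, and the running mean `A_k` of the losses
satisfies `A_m - A_{m-1} = (ℓ_m - A_{m-1}) / m`. A mean of `L`-Lipschitz functions is
`L`-Lipschitz, so `ℓ_m - A_{m-1}` is `2L`-Lipschitz and the difference is `2L/m`-Lipschitz.
-/

open Finset NNReal

def runningMean {𝕜 : Type*} [DivisionRing 𝕜] (a : ℕ → 𝕜) (m : ℕ) : 𝕜 :=
  (1 / (m : 𝕜)) * ∑ v ∈ Icc 1 m, a v

theorem runningMean_succ_sub_runningMean {𝕜 : Type*} [Field 𝕜] [CharZero 𝕜] (a : ℕ → 𝕜)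
    (m : ℕ) :
    runningMean a (m + 1) - runningMean a m = (a (m + 1) - runningMean a m) / (m + 1) := by
  unfold runningMean
  rw [sum_Icc_succ_top (Nat.le_add_left 1 m)]
  rcases eq_or_ne m 0 with rfl | hm
  · simp
  · push_cast
    field_simp
    ring

theorem LipschitzWith.finset_sum {α ι E : Type*} [PseudoEMetricSpace α]
    [SeminormedAddCommGroup E] {s : Finset ι} {f : ι → α → E} {K : ι → ℝ≥0}
    (hf : ∀ i ∈ s, LipschitzWith (K i) (f i)) :
    LipschitzWith (∑ i ∈ s, K i) fun x ↦ ∑ i ∈ s, f i x := by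
  classical
  induction s using Finset.induction_on with
  | empty => simpa using LipschitzWith.const (0 : E)
  | insert i s hi ih =>
    simp only [sum_insert hi]
    exact (hf i (mem_insert_self i s)).add (ih fun j hj ↦ hf j (mem_insert_of_mem hj))

theorem LipschitzWith.runningMean {α : Type*} [PseudoEMetricSpace α] {f : ℕ → α → ℝ} {K : ℝ≥0}
    {m : ℕ} (hf : ∀ v ∈ Icc 1 m, LipschitzWith K (f v)) :
    LipschitzWith K fun x ↦ _root_.runningMean (f · x) m := by
  have := (lipschitzWith_smul (1 / (m : ℝ))).comp (LipschitzWith.finset_sum hf)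
  refine this.weaken ?_
  rcases Nat.eq_zero_or_pos m with rfl | hm
  · simp
  · rw [← NNReal.coe_le_coe]
    push_cast
    simp [field]

theorem streaming_objective_difference_lipschitz_general
    {E : Type*} [NormedAddCommGroup E]
    (L : ℝ) (hL : 0 ≤ L)
    (ℓ : ℕ → E → ℝ) (hLip : ∀ v, ∀ Z₁ Z₂ : E, |ℓ v Z₁ - ℓ v Z₂| ≤ L * ‖Z₁ - Z₂‖)
    (C₂ : ℝ) (J : ℕ → E → ℝ)
    (hJ : ∀ m, 1 ≤ m → ∀ Z : E,
      J m Z = (1 / (m : ℝ)) * ∑ v ∈ Finset.Icc 1 m, ℓ v Z + C₂ * ‖Z‖ ^ 2) :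
    ∀ m, 2 ≤ m → ∀ Z₁ Z₂ : E,
      |(J m Z₁ - J (m - 1) Z₁) - (J m Z₂ - J (m - 1) Z₂)| ≤
        (2 * L / (m : ℝ)) * ‖Z₁ - Z₂‖ := by
  intro m hm Z₁ Z₂
  obtain ⟨n, rfl⟩ : ∃ n, m = n + 1 := ⟨m - 1, by omega⟩
  have hℓ (v : ℕ) : LipschitzWith L.toNNReal (ℓ v) :=
    .of_dist_le_mul fun Z₁ Z₂ ↦ by
      rw [Real.dist_eq, dist_eq_norm, Real.coe_toNNReal L hL]
      exact hLip v Z₁ Z₂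
  have hJ_sub (Z : E) :
      J (n + 1) Z - J n Z = (1 / (n + 1 : ℝ)) • (ℓ (n + 1) Z - runningMean (ℓ · Z) n) := by
    have hJ_succ : J (n + 1) Z = runningMean (ℓ · Z) (n + 1) + C₂ * ‖Z‖ ^ 2 :=
      hJ (n + 1) (by omega) Z
    have hJ_n : J n Z = runningMean (ℓ · Z) n + C₂ * ‖Z‖ ^ 2 := hJ n (by omega) Z
    rw [hJ_succ, hJ_n, smul_eq_mul]
    linear_combination runningMean_succ_sub_runningMean (ℓ · Z) n
  have hlip : LipschitzWith (‖1 / (n + 1 : ℝ)‖₊ * (L.toNNReal + L.toNNReal))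
      fun Z ↦ J (n + 1) Z - J n Z := by
    simp only [hJ_sub]
    exact (lipschitzWith_smul _).comp
      ((hℓ (n + 1)).sub (.runningMean (m := n) fun v _ ↦ hℓ v))
  rw [Nat.add_sub_cancel, ← Real.dist_eq, ← dist_eq_norm]
  refine (hlip.dist_le_mul Z₁ Z₂).trans_eq ?_
  rw [NNReal.coe_mul, NNReal.coe_add, Real.coe_toNNReal L hL, coe_nnnorm,
    Real.norm_of_nonneg (by positivity)]
  push_cast
  ring

/-- if each per-view loss `ℓ_v` is Lipschitz with constant `L`, then
`J_m − J_{m−1}` is Lipschitz with constant `2L/m`. -/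
theorem streaming_objective_difference_lipschitz
    {E : Type*} [NormedAddCommGroup E] [Module ℝ E]
    (L : ℝ) (hL : 0 ≤ L)
    (ℓ : ℕ → E → ℝ) (hLip : ∀ v, ∀ Z₁ Z₂ : E, |ℓ v Z₁ - ℓ v Z₂| ≤ L * ‖Z₁ - Z₂‖)
    (C₂ : ℝ) (J : ℕ → E → ℝ)
    (hJ : ∀ m, 1 ≤ m → ∀ Z : E,
      J m Z = (1 / (m : ℝ)) * ∑ v ∈ Finset.Icc 1 m, ℓ v Z + C₂ * ‖Z‖ ^ 2) :
    ∀ m, 2 ≤ m → ∀ Z₁ Z₂ : E,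
      |(J m Z₁ - J (m - 1) Z₁) - (J m Z₂ - J (m - 1) Z₂)| ≤
        (2 * L / (m : ℝ)) * ‖Z₁ - Z₂‖ :=
  streaming_objective_difference_lipschitz_general L hL ℓ hLip C₂ J hJ
end
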